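/- Let (a_n) be an arithmetic sequence and x ∈ 𝕋 with canonical representation x = Σ c_n/a_n. Suppose supp(x) has positive upper f-density of weight g, and there exist 0 < m₁ ≤ m₂ < 1/2 such that c_n/q_n ∈ [m₁, m₂] for all n ∈ supp(x). Then x ∉ t^{f,g}_{(a_n)}(𝕋); in fact {a_n x} ∈ [m₁, 2m₂] for all n in a set of positive upper f-density of weight g. -/

import Mathlib

open Filter Set

/-- A modulus function: nonnegative, vanishing exactly at 0, subadditive,
non-decreasing, right continuous at 0 (all on `[0,∞)`). -/
def IsModulus (f : ℝ → ℝ) : Prop :=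
  (∀ x : ℝ, 0 ≤ x → 0 ≤ f x) ∧
  (∀ x : ℝ, 0 ≤ x → (f x = 0 ↔ x = 0)) ∧
  (∀ x y : ℝ, 0 ≤ x → 0 ≤ y → f (x + y) ≤ f x + f y) ∧
  (∀ x y : ℝ, 0 ≤ x → x ≤ y → f x ≤ f y) ∧
  ContinuousWithinAt f (Set.Ici 0) 0

/-- An unbounded modulus function. -/
def IsUnboundedModulus (f : ℝ → ℝ) : Prop :=
  IsModulus f ∧ Tendsto f atTop atTop

/-- A weight function `g : ℕ → [0,∞)` with `g n → ∞` and `n / g n ↛ 0`. -/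
def IsWeight (g : ℕ → ℝ) : Prop :=
  (∀ n, 0 ≤ g n) ∧ Tendsto g atTop atTop ∧
  ¬ Tendsto (fun n : ℕ => (n : ℝ) / g n) atTop (nhds 0)

open scoped Classical in
/-- `|A ∩ [1,n]|`. -/
noncomputable def cnt (A : Set ℕ) (n : ℕ) : ℕ :=
  ((Finset.Icc 1 n).filter (fun m => m ∈ A)).card

/-- The ideal `𝒵_g(f)` of sets whose `f`-density of weight `g` is zero
(for nonnegative sequences, `limsup = 0` is equivalent to convergence to `0`). -/
noncomputable def Zd (f : ℝ → ℝ) (g : ℕ → ℝ) : Set (Set ℕ) :=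
  {A | Tendsto (fun n => f (cnt A n) / f (g n)) atTop (nhds 0)}

/-- The `f^g`-statistically characterized subgroup `t^{f,g}_{(a_n)}(𝕋)`. -/
noncomputable def statChar (f : ℝ → ℝ) (g : ℕ → ℝ) (a : ℕ → ℤ) :
    Set (AddCircle (1 : ℝ)) :=
  {x | ∀ ε > 0, {n : ℕ | ε ≤ ‖(a n) • x‖} ∈ Zd f g}

/-- An arithmetic sequence: `a 0 = 1`, strictly increasing, `a n ∣ a (n+1)`,
and all ratios `q_n ≥ 2`. -/
def IsArith (a : ℕ → ℕ) : Prop :=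
  a 0 = 1 ∧ StrictMono a ∧ (∀ n, a n ∣ a (n + 1)) ∧ (∀ n, 2 * a n ≤ a (n + 1))

/-- Canonical representation `x = Σ_{n≥1} c_n / a_n` with `0 ≤ c_n ≤ q_n - 1`
and `c_n < q_n - 1` infinitely often; here `q_n = a n / a (n-1)`. -/
def IsCanonRep (a : ℕ → ℕ) (c : ℕ → ℕ) (x : AddCircle (1 : ℝ)) : Prop :=
  c 0 = 0 ∧ (∀ n, 1 ≤ n → c n ≤ a n / a (n - 1) - 1) ∧
  (∀ N, ∃ n, N ≤ n ∧ c n < a n / a (n - 1) - 1) ∧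
  x = ((∑' n, (c n : ℝ) / (a n : ℝ) : ℝ) : AddCircle (1 : ℝ))

/-!
Write `q n = a n / a (n - 1)`. Multiplying `x = ∑ c n / a n` by `a m` turns every term with
`n ≤ m` into an integer, so `{a m x}` is the tail `∑_{n > m} a m c n / a n`. When `c (m + 1) ≠ 0`
its first term `c (m + 1) / q (m + 1)` is at least `m₁`, and since `a (m + k) ≥ 2 ^ k a m` its
`k`-th term is at most `m₂ / 2 ^ k`; hence `{a m x} ∈ [m₁, 2 m₂]` and
`‖a m x‖ ≥ min m₁ (1 - 2 m₂)`. Such `m` form the support of `x` shifted by one, which keeps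
positive density: a shift changes each count by at most one, while `f (g n) → ∞`.
-/

lemma IsArith.pos {a : ℕ → ℕ} (ha : IsArith a) (n : ℕ) : 0 < a n :=
  lt_of_lt_of_le (by rw [ha.1]; exact one_pos) (ha.2.1.monotone n.zero_le)

lemma IsArith.dvd_of_le {a : ℕ → ℕ} (ha : IsArith a) {k m : ℕ} (h : k ≤ m) : a k ∣ a m := by
  induction m, h using Nat.le_induction with
  | base => rfl
  | succ m _ ih => exact ih.trans (ha.2.2.1 m)

lemma IsArith.ratio_pos {a : ℕ → ℕ} (ha : IsArith a) (n : ℕ) : 0 < a n / a (n - 1) :=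
  Nat.div_pos (ha.2.1.monotone (n.sub_le 1)) (ha.pos _)

lemma IsArith.mul_two_pow_le {a : ℕ → ℕ} (ha : IsArith a) (m k : ℕ) :
    a m * 2 ^ k ≤ a (m + k) := by
  induction k with
  | zero => simp
  | succ k ih =>
    calc a m * 2 ^ (k + 1) = 2 * (a m * 2 ^ k) := by ring
      _ ≤ 2 * a (m + k) := Nat.mul_le_mul_left 2 ih
      _ ≤ a (m + (k + 1)) := ha.2.2.2 _

section Digits

variable {a c : ℕ → ℕ} {M : ℝ}

lemma IsArith.mul_div_le_of_le_mul_ratio (ha : IsArith a)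
    (hc : ∀ n, (c n : ℝ) ≤ M * (a n / a (n - 1) : ℕ)) (m k : ℕ) :
    (a m : ℝ) * (c (k + (m + 1)) / a (k + (m + 1))) ≤ M * (1 / 2) ^ k := by
  have hM : 0 ≤ M := by simpa [ha.pos 0] using (Nat.cast_nonneg _).trans (hc 0)
  set j := k + (m + 1)
  have hq : (0 : ℝ) < (a j / a (j - 1) : ℕ) := by exact_mod_cast ha.ratio_pos j
  have hj : (a j : ℝ) = a (m + k) * (a j / a (j - 1) : ℕ) := by
    rw [show m + k = j - 1 by omega]
    exact_mod_cast (Nat.mul_div_cancel' (ha.dvd_of_le (j.sub_le 1))).symm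
  have hpos : (0 : ℝ) < a (m + k) := by exact_mod_cast ha.pos _
  have hgrowth : (a m : ℝ) / a (m + k) ≤ (1 / 2) ^ k := by
    rw [div_le_iff₀ hpos, one_div, inv_pow, inv_mul_eq_div, le_div_iff₀ (by positivity)]
    exact_mod_cast ha.mul_two_pow_le m k
  calc (a m : ℝ) * (c j / a j) ≤ a m * (M * (a j / a (j - 1) : ℕ) / a j) := by
        gcongr; exact hc j
    _ = M * (a m / a (m + k)) := by rw [hj]; field_simp
    _ ≤ M * (1 / 2) ^ k := by gcongr

lemma IsArith.summable_div (ha : IsArith a) (hc : ∀ n, (c n : ℝ) ≤ M * (a n / a (n - 1) : ℕ)) :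
    Summable fun n => (c n : ℝ) / a n := by
  rw [← summable_nat_add_iff 1]
  refine Summable.of_nonneg_of_le (fun n => by positivity) (fun n => ?_)
    (summable_geometric_two.mul_left M)
  simpa [ha.1] using ha.mul_div_le_of_le_mul_ratio hc 0 n

lemma IsArith.exists_mul_tsum_eq_nat_add (ha : IsArith a)
    (hS : Summable fun n => (c n : ℝ) / a n) (m : ℕ) :
    ∃ N : ℕ, (a m : ℝ) * ∑' n, (c n : ℝ) / a n =
      N + ∑' k, (a m : ℝ) * (c (k + (m + 1)) / a (k + (m + 1))) := by
  refine ⟨∑ k ∈ Finset.range (m + 1), a m / a k * c k, ?_⟩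
  rw [← tsum_mul_left, ← (hS.mul_left _).sum_add_tsum_nat_add (m + 1)]
  push_cast
  congr 1
  refine Finset.sum_congr rfl fun k hk => ?_
  have hak : (a k : ℝ) ≠ 0 := by exact_mod_cast (ha.pos k).ne'
  rw [Nat.cast_div (ha.dvd_of_le (Finset.mem_range_succ_iff.1 hk)) hak]
  ring

lemma IsArith.fract_mul_tsum_mem_Icc (ha : IsArith a)
    (hc : ∀ n, (c n : ℝ) ≤ M * (a n / a (n - 1) : ℕ)) (hM : 2 * M < 1) {L : ℝ} {m : ℕ}
    (hL : L ≤ (c (m + 1) : ℝ) / (a (m + 1) / a m : ℕ)) :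
    Int.fract ((a m : ℝ) * ∑' n, (c n : ℝ) / a n) ∈ Icc L (2 * M) := by
  obtain ⟨N, hN⟩ := ha.exists_mul_tsum_eq_nat_add (ha.summable_div hc) m
  set t : ℕ → ℝ := fun k => (a m : ℝ) * (c (k + (m + 1)) / a (k + (m + 1)))
  have ht : Summable t :=
    (summable_nat_add_iff (m + 1)).2 ((ha.summable_div hc).mul_left (a m : ℝ))
  have ht₀ : ∀ k, 0 ≤ t k := fun k => by positivity
  have hfirst : t 0 = (c (m + 1) : ℝ) / (a (m + 1) / a m : ℕ) := by
    have hq : (a (m + 1) : ℝ) = a m * (a (m + 1) / a m : ℕ) := by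
      exact_mod_cast (Nat.mul_div_cancel' (ha.2.2.1 m)).symm
    have hpos : (0 : ℝ) < a m := by exact_mod_cast ha.pos m
    simp only [t, zero_add, hq]
    field_simp
  have hupper : ∑' k, t k ≤ 2 * M := by
    calc ∑' k, t k ≤ ∑' k, M * (1 / 2 : ℝ) ^ k :=
          ht.tsum_le_tsum (ha.mul_div_le_of_le_mul_ratio hc m)
            (summable_geometric_two.mul_left M)
      _ = 2 * M := by rw [tsum_mul_left, tsum_geometric_two, mul_comm]
  rw [hN, Int.fract_natCast_add, Int.fract_eq_self.2 ⟨tsum_nonneg ht₀, by linarith⟩]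
  exact ⟨hL.trans (hfirst ▸ ht.le_tsum 0 fun k _ => ht₀ k), hupper⟩

end Digits

lemma le_norm_coe_of_le_fract {y ε : ℝ} (h₁ : ε ≤ Int.fract y) (h₂ : Int.fract y ≤ 1 - ε) :
    ε ≤ ‖(y : AddCircle (1 : ℝ))‖ := by
  rw [UnitAddCircle.norm_eq, abs_sub_round_eq_min]
  exact le_min h₁ (by linarith)

lemma tendsto_div_zero_of_le {u v w : ℕ → ℝ} (hu : ∀ n, 0 ≤ u n) (huv : ∀ n, u n ≤ v n)
    (hw : ∀ n, 0 ≤ w n) (h : Tendsto (fun n => v n / w n) atTop (nhds 0)) :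
    Tendsto (fun n => u n / w n) atTop (nhds 0) :=
  squeeze_zero (fun n => div_nonneg (hu n) (hw n))
    (fun n => div_le_div_of_nonneg_right (huv n) (hw n)) h

section Density

variable {f : ℝ → ℝ} {g : ℕ → ℝ}

lemma cnt_mono {A B : Set ℕ} (h : A ⊆ B) (n : ℕ) : cnt A n ≤ cnt B n := by
  classical
  exact Finset.card_le_card (Finset.monotone_filter_right _ fun m _ hm => h hm)

lemma cnt_le_cnt_preimage_add_one (A : Set ℕ) (n : ℕ) :
    cnt A n ≤ cnt ((· + 1) ⁻¹' A) n + 1 := by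
  classical
  unfold cnt
  calc _ ≤ (insert 1 (((Finset.Icc 1 n).filter (· ∈ (· + 1) ⁻¹' A)).image (· + 1))).card := by
        refine Finset.card_le_card fun m hm => ?_
        simp only [Finset.mem_filter, Finset.mem_Icc] at hm
        rcases eq_or_ne m 1 with rfl | hm1
        · exact Finset.mem_insert_self _ _
        refine Finset.mem_insert_of_mem (Finset.mem_image.2 ⟨m - 1, ?_, by omega⟩)
        simp only [Finset.mem_filter, Finset.mem_Icc, mem_preimage, Nat.sub_add_cancel hm.1.1]
        exact ⟨⟨by omega, by omega⟩, hm.2⟩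
    _ ≤ _ := (Finset.card_insert_le _ _).trans (Nat.add_le_add_right Finset.card_image_le 1)

lemma Zd_mono (hf : IsModulus f) (hg : ∀ n, 0 ≤ g n) {A B : Set ℕ} (h : A ⊆ B)
    (hB : B ∈ Zd f g) : A ∈ Zd f g :=
  tendsto_div_zero_of_le (fun _ => hf.1 _ (Nat.cast_nonneg _))
    (fun n => hf.2.2.2.1 _ _ (Nat.cast_nonneg _) (Nat.cast_le.2 (cnt_mono h n)))
    (fun n => hf.1 _ (hg n)) hB

lemma preimage_add_one_notMem_Zd (hf : IsUnboundedModulus f) (hg₀ : ∀ n, 0 ≤ g n)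
    (hg : Tendsto g atTop atTop) {A : Set ℕ} (hA : A ∉ Zd f g) :
    (· + 1) ⁻¹' A ∉ Zd f g := by
  intro hB
  have hshift : Tendsto (fun n => (f (cnt ((· + 1) ⁻¹' A) n) + f 1) / f (g n)) atTop (nhds 0) := by
    simpa [add_div] using hB.add (tendsto_const_nhds.div_atTop (hf.2.comp hg))
  refine hA (tendsto_div_zero_of_le (fun _ => hf.1.1 _ (Nat.cast_nonneg _)) (fun n => ?_)
    (fun n => hf.1.1 _ (hg₀ n)) hshift)
  calc f (cnt A n) ≤ f (cnt ((· + 1) ⁻¹' A) n + 1) :=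
        hf.1.2.2.2.1 _ _ (Nat.cast_nonneg _) (by exact_mod_cast cnt_le_cnt_preimage_add_one A n)
    _ ≤ f (cnt ((· + 1) ⁻¹' A) n) + f 1 := hf.1.2.2.1 _ _ (Nat.cast_nonneg _) zero_le_one

end Density

theorem stmt16 (f : ℝ → ℝ) (hf : IsUnboundedModulus f) (g : ℕ → ℝ) (hg : IsWeight g)
    (a : ℕ → ℕ) (ha : IsArith a)
    (x : AddCircle (1 : ℝ)) (c : ℕ → ℕ) (hx : IsCanonRep a c x)
    (hsupp : {n | c n ≠ 0} ∉ Zd f g)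
    (m₁ m₂ : ℝ) (hm₁ : 0 < m₁) (hm₁₂ : m₁ ≤ m₂) (hm₂ : m₂ < 1 / 2)
    (hm : ∀ n, c n ≠ 0 →
      m₁ ≤ (c n : ℝ) / ((a n / a (n - 1) : ℕ) : ℝ) ∧
      (c n : ℝ) / ((a n / a (n - 1) : ℕ) : ℝ) ≤ m₂) :
    x ∉ statChar f g (fun n => (a n : ℤ)) ∧
    ∃ B : Set ℕ, B ∉ Zd f g ∧ ∀ n ∈ B,
      Int.fract ((a n : ℝ) * ∑' i, (c i : ℝ) / (a i : ℝ)) ∈ Set.Icc m₁ (2 * m₂) := by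
  have hc : ∀ n, (c n : ℝ) ≤ m₂ * (a n / a (n - 1) : ℕ) := by
    intro n
    by_cases h : c n = 0
    · simp only [h, Nat.cast_zero]
      exact mul_nonneg (hm₁.le.trans hm₁₂) (Nat.cast_nonneg _)
    · exact (div_le_iff₀ (by exact_mod_cast ha.ratio_pos n)).1 (hm n h).2
  set B := (· + 1) ⁻¹' {n | c n ≠ 0}
  have hB : B ∉ Zd f g := preimage_add_one_notMem_Zd hf hg.1 hg.2.1 hsupp
  have hfract : ∀ n ∈ B, Int.fract ((a n : ℝ) * ∑' i, (c i : ℝ) / a i) ∈ Icc m₁ (2 * m₂) :=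
    fun n hn => ha.fract_mul_tsum_mem_Icc hc (by linarith) (hm _ hn).1
  refine ⟨fun hxt => hB ?_, B, hB, hfract⟩
  have hε : 0 < min m₁ (1 - 2 * m₂) := lt_min hm₁ (by linarith)
  refine Zd_mono hf.1 hg.1 (fun n hn => ?_) (hxt _ hε)
  obtain ⟨h₁, h₂⟩ := hfract n hn
  have hsmul : (a n : ℤ) • x = (((a n : ℝ) * ∑' i, (c i : ℝ) / a i : ℝ) : AddCircle (1 : ℝ)) := by
    rw [hx.2.2.2, ← AddCircle.coe_zsmul, zsmul_eq_mul, Int.cast_natCast]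
  change _ ≤ ‖(a n : ℤ) • x‖
  rw [hsmul]
  exact le_norm_coe_of_le_fract ((min_le_left _ _).trans h₁)
    (by linarith [min_le_right m₁ (1 - 2 * m₂)])
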